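/- For every integer N ≥ 3, every 1 ≤ j ≤ N−2 and every α ∈ {+, 0, −}, the operator WB^α_j commutes with each of ρ(E), ρ(F) and ρ(K): [WB^α_j, ρ(E)] = [WB^α_j, ρ(F)] = [WB^α_j, ρ(K)] = 0. -/

import Mathlib

open Matrix Complex BigOperators Finset

noncomputable section

namespace LatticeW

/-- basis states of the chain of `N` spin-1/2 sites -/
abbrev St (N : ℕ) := Fin N → Fin 2
/-- operators on `ℂ^{2^N}` -/
abbrev Op (N : ℕ) := Matrix (St N) (St N) ℂ

def σx : Matrix (Fin 2) (Fin 2) ℂ := !![0, 1; 1, 0]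
def σy : Matrix (Fin 2) (Fin 2) ℂ := !![0, -Complex.I; Complex.I, 0]
def σz : Matrix (Fin 2) (Fin 2) ℂ := !![1, 0; 0, -1]
def σp : Matrix (Fin 2) (Fin 2) ℂ := (1/2 : ℂ) • (σx + Complex.I • σy)
def σm : Matrix (Fin 2) (Fin 2) ℂ := (1/2 : ℂ) • (σx - Complex.I • σy)

/-- the operator acting as `M` on the (0-indexed) site `j` and as the identity
elsewhere; junk value `0` if `j` is out of range. -/
def site (N : ℕ) (j : ℕ) (M : Matrix (Fin 2) (Fin 2) ℂ) : Op N :=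
  if h : j < N then
    (fun v w => if ∀ l, l ≠ (⟨j, h⟩ : Fin N) → v l = w l then M (v ⟨j, h⟩) (w ⟨j, h⟩) else 0)
  else 0

/-- diagonal value of σ^z on a one-site basis state -/
def zval (t : Fin 2) : ℂ := if t = 0 then 1 else -1

/-- Jordan–Wigner creation operator `c_j†` (0-indexed `j`; paper index `j+1`):
`c_j† = i^{j} (∏_{l<j} i σ^z_l) σ^+_j`. -/
def ad (N : ℕ) (j : ℕ) : Op N :=
  Complex.I ^ j •
    (Matrix.diagonal (fun v : St N =>
        ∏ l ∈ Finset.univ.filter (fun l : Fin N => (l : ℕ) < j), (Complex.I * zval (v l)))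
      * site N j σp)

/-- Jordan–Wigner annihilation operator `c_j` (0-indexed `j`):
`c_j = i^{-j} (∏_{l<j} (i σ^z_l)⁻¹) σ^-_j`. -/
def an (N : ℕ) (j : ℕ) : Op N :=
  (Complex.I ^ j)⁻¹ •
    (Matrix.diagonal (fun v : St N =>
        ∏ l ∈ Finset.univ.filter (fun l : Fin N => (l : ℕ) < j), (Complex.I * zval (v l))⁻¹)
      * site N j σm)

/-- Temperley–Lieb density `e_{j+1}` of the paper (0-indexed `j`). -/
def eTL (N : ℕ) (j : ℕ) : Op N :=
  an N j * ad N (j+1) + an N (j+1) * ad N j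
    + Complex.I • (ad N j * an N j - ad N (j+1) * an N (j+1))

/-- the XX Hamiltonian `H = -∑ e_j`. -/
def Hop (N : ℕ) : Op N := -∑ j ∈ Finset.range (N - 1), eTL N j

/-- `ρ(K) = ⊗_j (i σ^z)`. -/
def Kop (N : ℕ) : Op N := Matrix.diagonal (fun v : St N => ∏ l, (Complex.I * zval (v l)))

/-- `ρ(E) = (∑_{j=1}^N i^j c_j†) ρ(K)` (paper indices). -/
def Eop (N : ℕ) : Op N := (∑ j ∈ Finset.range N, Complex.I ^ (j+1) • ad N j) * Kop N

/-- `ρ(F) = ∑_{j=1}^N i^{j-1} c_j` (paper indices). -/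
def Fop (N : ℕ) : Op N := ∑ j ∈ Finset.range N, Complex.I ^ j • an N j

/-- divided power `ρ(e) = ∑_{j1<j2} (-1)^{j1+j2} i^{1-j1-j2} c_{j1}† c_{j2}†` (paper indices). -/
def sl2e (N : ℕ) : Op N :=
  ∑ j2 ∈ Finset.range N, ∑ j1 ∈ Finset.range j2,
    ((-1 : ℂ) ^ (j1 + j2) * (Complex.I ^ (j1 + j2 + 1))⁻¹) • (ad N j1 * ad N j2)

/-- divided power `ρ(f) = ∑_{j1<j2} i^{j1+j2-1} c_{j1} c_{j2}` (paper indices). -/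
def sl2f (N : ℕ) : Op N :=
  ∑ j2 ∈ Finset.range N, ∑ j1 ∈ Finset.range j2,
    (Complex.I ^ (j1 + j2 + 1)) • (an N j1 * an N j2)

/-- `WB^+_{j+1}` of the paper (0-indexed `j`). -/
def WBp (N : ℕ) (j : ℕ) : Op N :=
  (-1 : ℂ) ^ (j+1) •
    (ad N j * ad N (j+1) + Complex.I • (ad N j * ad N (j+2)) - ad N (j+1) * ad N (j+2))

/-- `WB^0_{j+1}` of the paper (0-indexed `j`). -/
def WB0 (N : ℕ) (j : ℕ) : Op N :=
  (-(1/2) : ℂ) •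
    ((1 : Op N) + Complex.I • (ad N j * an N (j+1)) - ad N j * an N (j+2)
      + Complex.I • (ad N (j+1) * an N j) - (2 : ℂ) • (ad N (j+1) * an N (j+1))
      - Complex.I • (ad N (j+1) * an N (j+2)) - ad N (j+2) * an N j
      - Complex.I • (ad N (j+2) * an N (j+1)))

/-- `WB^-_{j+1}` of the paper (0-indexed `j`). -/
def WBm (N : ℕ) (j : ℕ) : Op N :=
  (-1 : ℂ) ^ j •
    (an N j * an N (j+1) + Complex.I • (an N j * an N (j+2)) - an N (j+1) * an N (j+2))

/-- `WB^α_j` with `α = 0 ↦ +`, `α = 1 ↦ 0`, `α = 2 ↦ -`. -/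
def WB (N : ℕ) (α : Fin 3) (j : ℕ) : Op N :=
  match α with
  | 0 => WBp N j
  | 1 => WB0 N j
  | 2 => WBm N j

/-- the Fourier amplitudes `A_k(j)` (both `k` and `j` paper-indexed). -/
def Afun (N k j : ℕ) : ℂ :=
  (1/2 : ℂ) * (1 + Complex.I * Complex.exp (-(Complex.I * (Real.pi : ℂ) * (k : ℂ) / (N : ℂ))))
      * Complex.exp (Complex.I * (Real.pi : ℂ) * (k : ℂ) * (j : ℂ) / (N : ℂ))
  - (1/2 : ℂ) * (1 + Complex.I * Complex.exp (Complex.I * (Real.pi : ℂ) * (k : ℂ) / (N : ℂ)))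
      * Complex.exp (-(Complex.I * (Real.pi : ℂ) * (k : ℂ) * (j : ℂ) / (N : ℂ)))

/-- `θ†_k = ∑_{j=1}^N A_k(j) c_j†` (paper indices). -/
def θd (N k : ℕ) : Op N := ∑ j ∈ Finset.range N, Afun N k (j+1) • ad N j

/-- `θ_k = -i ∑_{j=1}^N A_k(j) c_j` (paper indices). -/
def θa (N k : ℕ) : Op N := (-Complex.I) • ∑ j ∈ Finset.range N, Afun N k (j+1) • an N j

/-- the normalization `sqrt(n/(N sin(πn/N)))` for `n ≠ 0`, and `1/√π` for `n = 0`. -/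
def ηcoef (N : ℕ) (n : ℤ) : ℂ :=
  if n = 0 then ((Real.sqrt Real.pi)⁻¹ : ℝ)
  else ((Real.sqrt ((n : ℝ) / ((N : ℝ) * Real.sin (Real.pi * (n : ℝ) / (N : ℝ)))) : ℝ) : ℂ)

/-- `η^+_n` -/
def ηp (N : ℕ) (n : ℤ) : Op N := ηcoef N n • θd N ((N : ℤ)/2 + n).toNat

/-- `η^-_n` -/
def ηm (N : ℕ) (n : ℤ) : Op N := ηcoef N n • θa N ((N : ℤ)/2 - n).toNat

/-- coefficient `(N/2 - j + (1-(-1)^j)/2) i^j` (paper index `j`). -/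
def γcoef (N j : ℕ) : ℂ :=
  ((N : ℂ)/2 - (j : ℂ) + (1 - (-1 : ℂ)^j)/2) * Complex.I ^ j

/-- the root vector `γ^+`. -/
def γp (N : ℕ) : Op N :=
  (Complex.I * (Real.sqrt Real.pi : ℂ) / (N : ℂ)) •
    ∑ j ∈ Finset.range N, γcoef N (j+1) • ad N j

/-- the root vector `γ^-`. -/
def γm (N : ℕ) : Op N :=
  (-((Real.sqrt Real.pi : ℂ) / (N : ℂ))) •
    ∑ j ∈ Finset.range N, γcoef N (j+1) • an N j

/-- Kronecker delta -/
def kδ (a b : ℤ) : ℂ := if a = b then 1 else 0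

/-- `s(j) = sqrt(sin(πj/N)/j)` with the convention `π/N` at `j = 0`. -/
def sfun (N : ℕ) (j : ℤ) : ℂ :=
  if j = 0 then ((Real.sqrt (Real.pi / (N : ℝ)) : ℝ) : ℂ)
  else ((Real.sqrt (Real.sin (Real.pi * (j : ℝ) / (N : ℝ)) / (j : ℝ)) : ℝ) : ℂ)

/-- the index range `-N/2+1 ≤ j ≤ N/2-1`. -/
def modeRange (N : ℕ) : Finset ℤ := Finset.Icc (-(N : ℤ)/2 + 1) ((N : ℤ)/2 - 1)

/-- the coefficient appearing in `Ĥ^r_n`. -/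
def Hcoef (N : ℕ) (r : ℕ) (n j1 j2 : ℤ) : ℂ :=
  ((Real.cos (Real.pi * ((j1 - j2 : ℤ) : ℝ) / (2 * (N : ℝ))) : ℝ) : ℂ)^r *
      ((-1 : ℂ)^r * kδ (j1 + j2) n + kδ (j1 + j2) (-n))
    - ((Real.sin (Real.pi * ((j1 + j2 : ℤ) : ℝ) / (2 * (N : ℝ))) : ℝ) : ℂ)^r *
      (kδ (j1 - j2) ((N : ℤ) + n) + kδ (j1 - j2) (-(N : ℤ) - n)
        + (-1 : ℂ)^r * kδ (j1 - j2) ((N : ℤ) - n) + (-1 : ℂ)^r * kδ (j1 - j2) (-(N : ℤ) + n))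

/-- the lattice Virasoro mode `Ĥ^r_n`. -/
def Hhat (N : ℕ) (r : ℕ) (n : ℤ) : Op N :=
  ∑ j1 ∈ modeRange N, ∑ j2 ∈ modeRange N,
    (sfun N j1 * sfun N j2 * Hcoef N r n j1 j2) • (ηp N j1 * ηm N j2)

/-- the coefficient `U_{r,n}(j1,j2)`. -/
def Ucoef (N : ℕ) (r : ℕ) (n j1 j2 : ℤ) : ℂ :=
  ((Real.sin (Real.pi * ((j1 - j2 : ℤ) : ℝ) / (2 * (N : ℝ))) : ℝ) : ℂ)
      * ((Real.cos (Real.pi * ((j1 - j2 : ℤ) : ℝ) / (2 * (N : ℝ))) : ℝ) : ℂ)^r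
      * ((-1 : ℂ)^r * kδ (j1 + j2) n + kδ (j1 + j2) (-n))
    + 2 * ((Real.cos (Real.pi * ((j1 + j2 : ℤ) : ℝ) / (2 * (N : ℝ))) : ℝ) : ℂ)
      * ((Real.sin (Real.pi * ((j1 + j2 : ℤ) : ℝ) / (2 * (N : ℝ))) : ℝ) : ℂ)^r
      * (kδ (j1 - j2) (-(N : ℤ) - n) + (-1 : ℂ)^r * kδ (j1 - j2) (-(N : ℤ) + n))

/-- the lattice W-algebra mode `Ŵ^{α,r}_n` with `α = 0 ↦ +`, `α = 1 ↦ 0`, `α = 2 ↦ -`. -/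
def What (N : ℕ) (α : Fin 3) (r : ℕ) (n : ℤ) : Op N :=
  ∑ j1 ∈ modeRange N, ∑ j2 ∈ modeRange N,
    (sfun N j1 * sfun N j2 * Ucoef N r n j1 j2) •
      (match α with
        | 0 => ηp N j1 * ηp N j2
        | 1 => ηp N j1 * ηm N j2 + ηm N j1 * ηp N j2
        | 2 => ηm N j1 * ηm N j2)

/-- the all-spins-down reference state. -/
def downSt (N : ℕ) : St N → ℂ := fun v => if ∀ j, v j = 1 then 1 else 0

/-- the vacuum `|0⟩ = θ†_{N/2} θ†_{N/2+1} ⋯ θ†_{N-1} |↓…↓⟩`. -/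
def vac (N : ℕ) : St N → ℂ :=
  (((List.range (N/2)).map (fun t => θd N (N/2 + t))).prod).mulVec (downSt N)

/-- the logarithmic partner `|0̃⟩ = γ^+ θ†_{N/2+1} ⋯ θ†_{N-1} |↓…↓⟩`. -/
def vacTilde (N : ℕ) : St N → ℂ :=
  (γp N * (((List.range (N/2 - 1)).map (fun t => θd N (N/2 + 1 + t))).prod)).mulVec (downSt N)

/-- the total spin `S^z = ½ ∑_j σ^z_j`. -/
def Sz (N : ℕ) : Op N := (1/2 : ℂ) • ∑ j ∈ Finset.range N, site N j σz

/- ************ XXZ spin-chain at generic q (statement 19) ************ -/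

/-- the single-site diagonal `diag(q, q⁻¹)` evaluated on a basis state. -/
def dq (q : ℂ) : Fin 2 → ℂ := fun t => if t = 0 then q else q⁻¹

/-- the XXZ Temperley–Lieb density `e_{i+1}` of the paper (0-indexed `i`). -/
def eXXZ (N : ℕ) (q : ℂ) (i : ℕ) : Op N :=
  ((q + q⁻¹)/4) • (1 : Op N)
    - (1/2 : ℂ) • (site N i σx * site N (i+1) σx + site N i σy * site N (i+1) σy)
    - ((q + q⁻¹)/4) • (site N i σz * site N (i+1) σz)
    + ((q - q⁻¹)/4) • (site N i σz - site N (i+1) σz)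

/-- the XXZ Hamiltonian with quantum-group symmetric boundary terms. -/
def HXXZ (N : ℕ) (q : ℂ) : Op N :=
  (1/2 : ℂ) • ∑ i ∈ Finset.range (N - 1),
      (site N i σx * site N (i+1) σx + site N i σy * site N (i+1) σy
        + ((q + q⁻¹)/2) • (site N i σz * site N (i+1) σz))
    - ((q - q⁻¹)/4) • (site N 0 σz - site N (N-1) σz)

/-- `K_N = ⊗_j diag(q,q⁻¹)`. -/
def KXXZ (N : ℕ) (q : ℂ) : Op N := Matrix.diagonal (fun v : St N => ∏ l, dq q (v l))

/-- `E_N = ∑_j σ^+_j ⊗ ∏_{l>j} diag(q,q⁻¹)_l`. -/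
def EXXZ (N : ℕ) (q : ℂ) : Op N :=
  ∑ j ∈ Finset.range N,
    site N j σp *
      Matrix.diagonal (fun v : St N =>
        ∏ l ∈ Finset.univ.filter (fun l : Fin N => j < (l : ℕ)), dq q (v l))

/-- `F_N = ∑_j (∏_{l<j} diag(q⁻¹,q)_l) ⊗ σ^-_j`. -/
def FXXZ (N : ℕ) (q : ℂ) : Op N :=
  ∑ j ∈ Finset.range N,
    Matrix.diagonal (fun v : St N =>
        ∏ l ∈ Finset.univ.filter (fun l : Fin N => (l : ℕ) < j), (dq q (v l))⁻¹) *
      site N j σm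

end LatticeW

/-!
Under the Jordan–Wigner map the `c_j`, `c_j†` satisfy the canonical anticommutation relations,
and `ρ(K)`, the diagonal operator `∏ (i σ^z)`, anticommutes with each of them. Every `WB^α_j` is a
combination of `1` and fermion bilinears, hence commutes with `ρ(K)`; as
`ρ(E) = (∑_c i^{c+1} c_c†) ρ(K)`, it remains to treat the two linear forms `∑_c i^{c+1} c_c†` and
`ρ(F) = ∑_c i^c c_c`. When `z` has scalar anticommutators `{x, z} = α` and `{y, z} = β`, one has
`[x y, z] = β x - α y`, so both commutators are linear combinations of `c_j, c_{j+1}, c_{j+2}`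
(or of their adjoints), and their coefficients vanish because the coefficient matrix of `WB^α_j`
on the sites `j, j+1, j+2` annihilates the vector of relative phases `(1, i, -1)`.
-/

namespace LatticeW

open Function

variable {N : ℕ}

attribute [local instance] LieRing.ofAssociativeRing

section Commutators

variable {R A : Type*} [CommRing R] [Ring A] [Algebra R A]

lemma smul_anticomm_smul (c d : R) (x y : A) :
    (c • x) * (d • y) + (d • y) * (c • x) = (c * d) • (x * y + y * x) := by
  rw [smul_mul_smul_comm, smul_mul_smul_comm, mul_comm d c, smul_add]

lemma lie_mul_eq_anticomm (x y z : A) :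
    ⁅x * y, z⁆ = x * (y * z + z * y) - (x * z + z * x) * y := by
  rw [Ring.lie_def]; noncomm_ring

lemma lie_mul_of_anticomm {x y z : A} {α β : R} (hx : x * z + z * x = α • 1)
    (hy : y * z + z * y = β • 1) : ⁅x * y, z⁆ = β • x - α • y := by
  rw [lie_mul_eq_anticomm, hx, hy, mul_smul_one, smul_one_mul]

lemma lie_mul_eq_zero_of_anticomm {x y z : A} (hx : x * z + z * x = 0)
    (hy : y * z + z * y = 0) : ⁅x * y, z⁆ = 0 := by
  rw [lie_mul_eq_anticomm, hx, hy, mul_zero, zero_mul, sub_zero]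

lemma one_lie (x : A) : ⁅(1 : A), x⁆ = 0 := (Commute.one_left x).lie_eq

lemma anticomm_sum_smul {ι : Type*} (x : A) (s : Finset ι) (f : ι → R) (y : ι → A) :
    x * (∑ i ∈ s, f i • y i) + (∑ i ∈ s, f i • y i) * x = ∑ i ∈ s, f i • (x * y i + y i * x) := by
  simp only [Finset.mul_sum, Finset.sum_mul, mul_smul_comm, smul_mul_assoc, smul_add,
    Finset.sum_add_distrib]

end Commutators

section SiteOperators

lemma site_apply (a : Fin N) (M : Matrix (Fin 2) (Fin 2) ℂ) (v w : St N) :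
    site N a M v w = if ∀ l, l ≠ a → v l = w l then M (v a) (w a) else 0 := by
  simp [site]

lemma site_of_le {j : ℕ} (h : N ≤ j) (M : Matrix (Fin 2) (Fin 2) ℂ) : site N j M = 0 := by
  simp [site, not_lt.mpr h]

lemma site_apply_eq_sum (a : Fin N) (M : Matrix (Fin 2) (Fin 2) ℂ) (v w : St N) :
    site N a M v w = ∑ t : Fin 2, if update v a t = w then M (v a) t else 0 := by
  rw [site_apply]
  by_cases h : ∀ l, l ≠ a → v l = w l
  · have hupd : ∀ t, update v a t = w ↔ t = w a := fun t => by
      rw [update_eq_iff]; exact and_iff_left h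
    simp only [if_pos h, hupd, Finset.sum_ite_eq', Finset.mem_univ, if_true]
  · refine (if_neg h).trans (Finset.sum_eq_zero fun t _ => if_neg fun hw => h fun l hl => ?_).symm
    rw [← hw, update_of_ne hl]

lemma site_mul_apply (a : Fin N) (M : Matrix (Fin 2) (Fin 2) ℂ) (A : Op N) (v w : St N) :
    (site N a M * A) v w = ∑ t : Fin 2, M (v a) t * A (update v a t) w := by
  simp only [Matrix.mul_apply, site_apply_eq_sum, Finset.sum_mul, ite_mul, zero_mul]
  rw [Finset.sum_comm]
  simp

lemma site_mul_site (a : Fin N) (M M' : Matrix (Fin 2) (Fin 2) ℂ) :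
    site N a M * site N a M' = site N a (M * M') := by
  ext v w
  have hupd : ∀ t, (∀ l, l ≠ a → update v a t l = w l) ↔ ∀ l, l ≠ a → v l = w l :=
    fun t => forall₂_congr fun l hl => by rw [update_of_ne hl]
  rw [site_mul_apply, site_apply]
  simp only [site_apply, hupd, update_self]
  split_ifs <;> simp [Matrix.mul_apply]

lemma site_commute {a b : Fin N} (hab : a ≠ b) (M M' : Matrix (Fin 2) (Fin 2) ℂ) :
    Commute (site N a M) (site N b M') := by
  ext v w
  simp only [site_mul_apply, site_apply_eq_sum, Finset.mul_sum, update_of_ne hab,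
    update_of_ne hab.symm, update_comm hab]
  rw [Finset.sum_comm]
  congr! 2 with s _ t _
  split_ifs <;> ring

lemma site_one (a : Fin N) : site N a 1 = 1 := by
  ext v w
  rw [site_apply, one_apply, one_apply]
  by_cases h : ∀ l, l ≠ a → v l = w l
  · have hvw : v = w ↔ v a = w a :=
      ⟨(congrFun · a), fun ha => funext fun l => (eq_or_ne l a).elim (· ▸ ha) (h l)⟩
    simp only [if_pos h, hvw]
  · have hvw : v ≠ w := fun hvw => h fun l _ => congrFun hvw l
    simp only [if_neg h, if_neg hvw]

lemma site_add (a : Fin N) (M M' : Matrix (Fin 2) (Fin 2) ℂ) :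
    site N a (M + M') = site N a M + site N a M' := by
  ext v w
  simp only [site_apply, Matrix.add_apply]
  split_ifs <;> simp

end SiteOperators

section Strings

def IndepAt (a : Fin N) (D : St N → ℂ) : Prop := ∀ v t, D (update v a t) = D v

def OddAt (a : Fin N) (D : St N → ℂ) : Prop := ∀ v t, t ≠ v a → D (update v a t) = -D v

lemma diagonal_mul_site_of_indepAt {a : Fin N} {D : St N → ℂ} (hD : IndepAt a D)
    (M : Matrix (Fin 2) (Fin 2) ℂ) : diagonal D * site N a M = site N a M * diagonal D := by
  ext v w
  rw [diagonal_mul, mul_diagonal, site_apply]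
  split_ifs with h
  · have hDw : D w = D v := update_eq_iff.2 ⟨rfl, h⟩ ▸ hD v (w a)
    rw [hDw, mul_comm]
  · simp

lemma diagonal_mul_site_of_oddAt {a : Fin N} {D : St N → ℂ} (hD : OddAt a D)
    {M : Matrix (Fin 2) (Fin 2) ℂ} (hM : ∀ t, M t t = 0) :
    diagonal D * site N a M = -(site N a M * diagonal D) := by
  ext v w
  rw [neg_apply, diagonal_mul, mul_diagonal, site_apply]
  split_ifs with h
  · by_cases hva : w a = v a
    · simp [hva, hM]
    · have hDw : D w = -D v := update_eq_iff.2 ⟨rfl, h⟩ ▸ hD v (w a) hva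
      rw [hDw]; ring
  · simp

def jwString (g : Fin 2 → ℂ) (j : ℕ) (v : St N) : ℂ :=
  ∏ l ∈ univ.filter (fun l : Fin N => (l : ℕ) < j), g (v l)

lemma jwString_indepAt (g : Fin 2 → ℂ) {j : ℕ} {a : Fin N} (h : j ≤ a) :
    IndepAt a (jwString g j) := fun v t =>
  prod_congr rfl fun l hl => by
    rw [update_of_ne]
    rintro rfl
    exact absurd (mem_filter.1 hl).2 (not_lt.2 h)

lemma jwString_oddAt {g : Fin 2 → ℂ} (hg : g 1 = -g 0) {j : ℕ} {a : Fin N} (h : (a : ℕ) < j) :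
    OddAt a (jwString g j) := by
  intro v t ht
  have ha : a ∈ univ.filter (fun l : Fin N => (l : ℕ) < j) := by simpa using h
  have hflip : g t = -g (v a) := by
    revert ht; fin_cases t <;> generalize v a = s <;> fin_cases s <;> simp [hg]
  simp only [jwString, ← mul_prod_erase _ _ ha, update_self, hflip, neg_mul]
  congr 2
  exact prod_congr rfl fun l hl => by rw [update_of_ne (ne_of_mem_erase hl)]

lemma jwString_mul (g g' : Fin 2 → ℂ) (j : ℕ) :
    (fun v : St N => jwString g j v * jwString g' j v) = jwString (g * g') j := by
  funext v
  simp [jwString, prod_mul_distrib]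

lemma jwString_one (j : ℕ) : jwString (N := N) 1 j = 1 := by
  funext v
  simp [jwString]

end Strings

section JordanWigner

def jwOp (g : Fin 2 → ℂ) (M : Matrix (Fin 2) (Fin 2) ℂ) (j : ℕ) : Op N :=
  diagonal (jwString g j) * site N j M

lemma I_mul_zval_one : I * zval 1 = -(I * zval 0) := by simp [zval]

lemma inv_I_mul_zval_one : (I * zval 1)⁻¹ = -(I * zval 0)⁻¹ := by
  rw [I_mul_zval_one, inv_neg]

lemma ad_eq (j : ℕ) : ad N j = I ^ j • jwOp (fun t => I * zval t) σp j := rfl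

lemma an_eq (j : ℕ) : an N j = (I ^ j)⁻¹ • jwOp (fun t => (I * zval t)⁻¹) σm j := rfl

lemma Kop_eq : Kop N = diagonal (jwString (fun t => I * zval t) N) := by
  unfold jwString; rw [filter_true_of_mem fun l _ => l.isLt]; rfl

lemma jwOp_of_le (g : Fin 2 → ℂ) (M : Matrix (Fin 2) (Fin 2) ℂ) {j : ℕ} (h : N ≤ j) :
    jwOp g M j = (0 : Op N) := by
  rw [jwOp, site_of_le h, mul_zero]

lemma jwOp_anticomm_of_lt {g g' : Fin 2 → ℂ} (hg' : g' 1 = -g' 0)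
    {M : Matrix (Fin 2) (Fin 2) ℂ} (hM : ∀ t, M t t = 0) (M' : Matrix (Fin 2) (Fin 2) ℂ)
    {a b : ℕ} (hab : a < b) :
    jwOp g M a * jwOp g' M' b + jwOp g' M' b * jwOp g M a = (0 : Op N) := by
  rcases le_or_gt N b with hb | hb
  · simp [jwOp_of_le g' M' hb]
  obtain ⟨b, rfl⟩ : ∃ b' : Fin N, (b' : ℕ) = b := ⟨⟨b, hb⟩, rfl⟩
  obtain ⟨a, rfl⟩ : ∃ a' : Fin N, (a' : ℕ) = a := ⟨⟨a, hab.trans hb⟩, rfl⟩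
  set F : Op N := diagonal (jwString g a)
  set G : Op N := diagonal (jwString g' b)
  set P := site N a M
  set Q := site N b M'
  have hPG : P * G = -(G * P) := by
    rw [diagonal_mul_site_of_oddAt (jwString_oddAt hg' hab) hM, neg_neg]
  have hFQ : F * Q = Q * F := diagonal_mul_site_of_indepAt (jwString_indepAt g hab.le) M'
  have hFG : F * G = G * F := commute_diagonal _ _
  have hPQ : P * Q = Q * P := site_commute (Fin.ne_of_lt hab) M M'
  calc F * P * (G * Q) + G * Q * (F * P) = -(F * G * (P * Q)) + G * F * (Q * P) := by
        rw [mul_assoc F P, ← mul_assoc P, hPG, mul_assoc G Q, ← mul_assoc Q, ← hFQ]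
        noncomm_ring
    _ = 0 := by rw [hFG, hPQ, neg_add_cancel]

lemma jwOp_anticomm {g g' : Fin 2 → ℂ} (hg : g 1 = -g 0) (hg' : g' 1 = -g' 0)
    {M M' : Matrix (Fin 2) (Fin 2) ℂ} (hM : ∀ t, M t t = 0) (hM' : ∀ t, M' t t = 0)
    {a b : ℕ} (hab : a ≠ b) :
    jwOp g M a * jwOp g' M' b + jwOp g' M' b * jwOp g M a = (0 : Op N) := by
  rcases hab.lt_or_gt with h | h
  · exact jwOp_anticomm_of_lt hg' hM M' h
  · rw [add_comm]; exact jwOp_anticomm_of_lt hg hM' M h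

lemma jwOp_anticomm_self (g g' : Fin 2 → ℂ) (M M' : Matrix (Fin 2) (Fin 2) ℂ) (a : ℕ) :
    jwOp g M a * jwOp g' M' a + jwOp g' M' a * jwOp g M a
      = (jwOp (g * g') (M * M' + M' * M) a : Op N) := by
  rcases le_or_gt N a with ha | ha
  · simp [jwOp_of_le _ _ ha]
  obtain ⟨a, rfl⟩ : ∃ a' : Fin N, (a' : ℕ) = a := ⟨⟨a, ha⟩, rfl⟩
  set F : Op N := diagonal (jwString g a)
  set G : Op N := diagonal (jwString g' a)
  set P := site N a M
  set Q := site N a M'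
  have hPG : P * G = G * P := (diagonal_mul_site_of_indepAt (jwString_indepAt g' le_rfl) M).symm
  have hQF : Q * F = F * Q := (diagonal_mul_site_of_indepAt (jwString_indepAt g le_rfl) M').symm
  have hFG : F * G = diagonal (jwString (g * g') a) := by
    rw [diagonal_mul_diagonal, jwString_mul]
  calc F * P * (G * Q) + G * Q * (F * P) = F * G * (P * Q) + G * F * (Q * P) := by
        rw [mul_assoc F P, ← mul_assoc P, hPG, mul_assoc G Q, ← mul_assoc Q, hQF]
        noncomm_ring
    _ = _ := by
      rw [← commute_diagonal (jwString g a), hFG, site_mul_site, site_mul_site, ← mul_add,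
        ← site_add, jwOp]

lemma jwOp_anticomm_Kop (g : Fin 2 → ℂ) {M : Matrix (Fin 2) (Fin 2) ℂ} (hM : ∀ t, M t t = 0)
    (j : ℕ) : jwOp g M j * Kop N + Kop N * jwOp g M j = 0 := by
  rcases le_or_gt N j with hj | hj
  · simp [jwOp_of_le _ _ hj]
  obtain ⟨a, rfl⟩ : ∃ a' : Fin N, (a' : ℕ) = j := ⟨⟨j, hj⟩, rfl⟩
  rw [Kop_eq, jwOp]
  set K : Op N := diagonal (jwString (fun t => I * zval t) N)
  set F : Op N := diagonal (jwString g a)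
  set P := site N a M
  have hKP : K * P = -(P * K) :=
    diagonal_mul_site_of_oddAt (jwString_oddAt (g := fun t => I * zval t) I_mul_zval_one a.isLt) hM
  have hFK : F * K = K * F := commute_diagonal _ _
  calc F * P * K + K * (F * P) = F * (P * K) + F * (K * P) := by
        rw [← mul_assoc K, ← hFK]; noncomm_ring
    _ = 0 := by rw [hKP]; noncomm_ring

end JordanWigner

section CAR

lemma σp_eq : σp = !![0, 1; 0, 0] := by
  ext i j; fin_cases i <;> fin_cases j <;> simp [σp, σx, σy, ← two_mul]

lemma σm_eq : σm = !![0, 0; 1, 0] := by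
  ext i j; fin_cases i <;> fin_cases j <;> simp [σm, σx, σy, ← two_mul]

lemma σp_apply_self (t : Fin 2) : σp t t = 0 := by fin_cases t <;> simp [σp_eq]

lemma σm_apply_self (t : Fin 2) : σm t t = 0 := by fin_cases t <;> simp [σm_eq]

lemma σp_mul_self : σp * σp = 0 := by
  rw [σp_eq]; ext i j; fin_cases i <;> fin_cases j <;> simp

lemma σm_mul_self : σm * σm = 0 := by
  rw [σm_eq]; ext i j; fin_cases i <;> fin_cases j <;> simp

lemma σm_mul_σp_add : σm * σp + σp * σm = 1 := by
  rw [σp_eq, σm_eq]; ext i j; fin_cases i <;> fin_cases j <;> simp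

lemma jwOp_zero (g : Fin 2 → ℂ) (j : ℕ) : jwOp g 0 j = (0 : Op N) := by
  rcases le_or_gt N j with hj | hj
  · exact jwOp_of_le g 0 hj
  obtain ⟨a, rfl⟩ : ∃ a' : Fin N, (a' : ℕ) = j := ⟨⟨j, hj⟩, rfl⟩
  ext v w
  simp [jwOp, site_apply]

lemma jwOp_one {j : ℕ} (hj : j < N) : jwOp 1 1 j = (1 : Op N) := by
  obtain ⟨a, rfl⟩ : ∃ a' : Fin N, (a' : ℕ) = j := ⟨⟨j, hj⟩, rfl⟩
  rw [jwOp, jwString_one, Pi.one_def, diagonal_one, site_one, mul_one]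

lemma ad_anticomm_ad (a b : ℕ) : ad N a * ad N b + ad N b * ad N a = 0 := by
  rw [ad_eq, ad_eq, smul_anticomm_smul]
  rcases eq_or_ne a b with rfl | hab
  · rw [jwOp_anticomm_self, σp_mul_self, add_zero, jwOp_zero, smul_zero]
  · rw [jwOp_anticomm I_mul_zval_one I_mul_zval_one σp_apply_self σp_apply_self hab, smul_zero]

lemma an_anticomm_an (a b : ℕ) : an N a * an N b + an N b * an N a = 0 := by
  rw [an_eq, an_eq, smul_anticomm_smul]
  rcases eq_or_ne a b with rfl | hab
  · rw [jwOp_anticomm_self, σm_mul_self, add_zero, jwOp_zero, smul_zero]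
  · rw [jwOp_anticomm inv_I_mul_zval_one inv_I_mul_zval_one σm_apply_self σm_apply_self hab,
      smul_zero]

lemma an_anticomm_ad (a : ℕ) {b : ℕ} (hb : b < N) :
    an N a * ad N b + ad N b * an N a = if a = b then 1 else 0 := by
  rw [an_eq, ad_eq, smul_anticomm_smul]
  split_ifs with hab
  · subst hab
    have hstring : (fun t => (I * zval t)⁻¹) * (fun t => I * zval t) = 1 := by
      funext t; exact inv_mul_cancel₀ (by fin_cases t <;> simp [zval])
    rw [jwOp_anticomm_self, hstring, σm_mul_σp_add, jwOp_one hb,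
      inv_mul_cancel₀ (pow_ne_zero _ I_ne_zero), one_smul]
  · rw [jwOp_anticomm inv_I_mul_zval_one I_mul_zval_one σm_apply_self σp_apply_self hab,
      smul_zero]

lemma ad_anticomm_Kop (a : ℕ) : ad N a * Kop N + Kop N * ad N a = 0 := by
  rw [ad_eq, smul_mul_assoc, mul_smul_comm, ← smul_add, jwOp_anticomm_Kop _ σp_apply_self,
    smul_zero]

lemma an_anticomm_Kop (a : ℕ) : an N a * Kop N + Kop N * an N a = 0 := by
  rw [an_eq, smul_mul_assoc, mul_smul_comm, ← smul_add, jwOp_anticomm_Kop _ σm_apply_self,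
    smul_zero]

end CAR

def creationSum (N : ℕ) : Op N := ∑ c ∈ range N, I ^ (c + 1) • ad N c

lemma Eop_eq : Eop N = creationSum N * Kop N := rfl

lemma ad_anticomm_Fop {a : ℕ} (ha : a < N) : ad N a * Fop N + Fop N * ad N a = I ^ a • 1 := by
  rw [Fop, anticomm_sum_smul]
  simp_rw [add_comm (ad N a * _), an_anticomm_ad _ ha]
  simp [ha]

lemma an_anticomm_Fop (a : ℕ) : an N a * Fop N + Fop N * an N a = 0 := by
  rw [Fop, anticomm_sum_smul]
  simp [an_anticomm_an]

lemma an_anticomm_creationSum {a : ℕ} (ha : a < N) :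
    an N a * creationSum N + creationSum N * an N a = I ^ (a + 1) • 1 := by
  rw [creationSum, anticomm_sum_smul,
    sum_congr rfl fun c hc => by rw [an_anticomm_ad a (mem_range.1 hc)]]
  simp [ha]

lemma ad_anticomm_creationSum (a : ℕ) :
    ad N a * creationSum N + creationSum N * ad N a = 0 := by
  rw [creationSum, anticomm_sum_smul]
  simp [ad_anticomm_ad]

lemma lie_ad_mul_ad_Fop {a b : ℕ} (ha : a < N) (hb : b < N) :
    ⁅ad N a * ad N b, Fop N⁆ = I ^ b • ad N a - I ^ a • ad N b :=
  lie_mul_of_anticomm (ad_anticomm_Fop ha) (ad_anticomm_Fop hb)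

lemma lie_an_mul_an_Fop (a b : ℕ) : ⁅an N a * an N b, Fop N⁆ = 0 :=
  lie_mul_eq_zero_of_anticomm (an_anticomm_Fop a) (an_anticomm_Fop b)

lemma lie_ad_mul_an_Fop {a : ℕ} (ha : a < N) (b : ℕ) :
    ⁅ad N a * an N b, Fop N⁆ = -(I ^ a • an N b) := by
  rw [lie_mul_of_anticomm (ad_anticomm_Fop ha) (β := 0) (by rw [zero_smul, an_anticomm_Fop]),
    zero_smul, zero_sub]

lemma lie_ad_mul_ad_creationSum (a b : ℕ) : ⁅ad N a * ad N b, creationSum N⁆ = 0 :=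
  lie_mul_eq_zero_of_anticomm (ad_anticomm_creationSum a) (ad_anticomm_creationSum b)

lemma lie_an_mul_an_creationSum {a b : ℕ} (ha : a < N) (hb : b < N) :
    ⁅an N a * an N b, creationSum N⁆ = I ^ (b + 1) • an N a - I ^ (a + 1) • an N b :=
  lie_mul_of_anticomm (an_anticomm_creationSum ha) (an_anticomm_creationSum hb)

lemma lie_ad_mul_an_creationSum (a : ℕ) {b : ℕ} (hb : b < N) :
    ⁅ad N a * an N b, creationSum N⁆ = I ^ (b + 1) • ad N a := by
  rw [lie_mul_of_anticomm (α := 0) (by rw [zero_smul, ad_anticomm_creationSum])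
    (an_anticomm_creationSum hb), zero_smul, sub_zero]

lemma lie_ad_mul_ad_Kop (a b : ℕ) : ⁅ad N a * ad N b, Kop N⁆ = 0 :=
  lie_mul_eq_zero_of_anticomm (ad_anticomm_Kop a) (ad_anticomm_Kop b)

lemma lie_an_mul_an_Kop (a b : ℕ) : ⁅an N a * an N b, Kop N⁆ = 0 :=
  lie_mul_eq_zero_of_anticomm (an_anticomm_Kop a) (an_anticomm_Kop b)

lemma lie_ad_mul_an_Kop (a b : ℕ) : ⁅ad N a * an N b, Kop N⁆ = 0 :=
  lie_mul_eq_zero_of_anticomm (ad_anticomm_Kop a) (an_anticomm_Kop b)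

section WB

variable {j : ℕ}

lemma lie_WBp_Fop (h : j + 2 < N) : ⁅WBp N j, Fop N⁆ = 0 := by
  simp only [WBp, smul_lie, add_lie, sub_lie, lie_ad_mul_ad_Fop, h, (by omega : j < N),
    (by omega : j + 1 < N)]
  match_scalars <;> ring_nf <;> simp only [I_sq, I_pow_three] <;> ring

lemma lie_WBp_creationSum : ⁅WBp N j, creationSum N⁆ = 0 := by
  simp only [WBp, smul_lie, add_lie, sub_lie, lie_ad_mul_ad_creationSum, smul_zero, add_zero,
    sub_zero]

lemma lie_WBm_Fop : ⁅WBm N j, Fop N⁆ = 0 := by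
  simp only [WBm, smul_lie, add_lie, sub_lie, lie_an_mul_an_Fop, smul_zero, add_zero, sub_zero]

lemma lie_WBm_creationSum (h : j + 2 < N) : ⁅WBm N j, creationSum N⁆ = 0 := by
  simp only [WBm, smul_lie, add_lie, sub_lie, lie_an_mul_an_creationSum, h, (by omega : j < N),
    (by omega : j + 1 < N)]
  match_scalars <;> ring_nf <;> simp only [I_sq, I_pow_three, I_pow_four] <;> ring

lemma lie_WB0_Fop (h : j + 2 < N) : ⁅WB0 N j, Fop N⁆ = 0 := by
  simp only [WB0, smul_lie, add_lie, sub_lie, one_lie, lie_ad_mul_an_Fop, h,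
    (by omega : j < N), (by omega : j + 1 < N)]
  match_scalars <;> ring_nf <;> simp only [I_sq, I_pow_three] <;> ring

lemma lie_WB0_creationSum (h : j + 2 < N) : ⁅WB0 N j, creationSum N⁆ = 0 := by
  simp only [WB0, smul_lie, add_lie, sub_lie, one_lie,
    lie_ad_mul_an_creationSum, h, (by omega : j < N), (by omega : j + 1 < N)]
  match_scalars <;> ring_nf <;> simp only [I_sq, I_pow_three, I_pow_four] <;> ring

lemma lie_WB_Kop (α : Fin 3) : ⁅WB N α j, Kop N⁆ = 0 := by
  fin_cases α <;>
    simp only [WB, WBp, WB0, WBm, smul_lie, add_lie, sub_lie, one_lie, lie_ad_mul_ad_Kop,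
      lie_ad_mul_an_Kop, lie_an_mul_an_Kop, smul_zero, add_zero, sub_zero]

end WB

end LatticeW

theorem LatticeW.WB_commutes_Ures_general (N : ℕ) (j : ℕ) (hj : j < N - 2)
    (α : Fin 3) :
    WB N α j * Eop N - Eop N * WB N α j = 0 ∧
    WB N α j * Fop N - Fop N * WB N α j = 0 ∧
    WB N α j * Kop N - Kop N * WB N α j = 0 := by
  have h : j + 2 < N := by omega
  suffices ⁅WB N α j, creationSum N⁆ = 0 ∧ ⁅WB N α j, Fop N⁆ = 0 ∧ ⁅WB N α j, Kop N⁆ = 0 by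
    obtain ⟨hS, hF, hK⟩ := this
    simp only [← Ring.lie_def, Eop_eq]
    exact ⟨((commute_iff_lie_eq.2 hS).mul_right (commute_iff_lie_eq.2 hK)).lie_eq, hF, hK⟩
  refine ⟨?_, ?_, lie_WB_Kop α⟩ <;> fin_cases α
  · exact lie_WBp_creationSum
  · exact lie_WB0_creationSum h
  · exact lie_WBm_creationSum h
  · exact lie_WBp_Fop h
  · exact lie_WB0_Fop h
  · exact lie_WBm_Fop

/-- each `WB^α_j` commutes with `ρ(E), ρ(F), ρ(K)`. -/
theorem LatticeW.WB_commutes_Ures (N : ℕ) (hN : 3 ≤ N) (j : ℕ) (hj : j < N - 2)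
    (α : Fin 3) :
    WB N α j * Eop N - Eop N * WB N α j = 0 ∧
    WB N α j * Fop N - Fop N * WB N α j = 0 ∧
    WB N α j * Kop N - Kop N * WB N α j = 0 :=
  LatticeW.WB_commutes_Ures_general N j hj α
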